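/- Suppose the target model factors through the protected variable: f_tar = h ∘ f_aux for some differentiable h : ℝᵖ → ℝ, with ∇f_aux(x₀) = A of full row rank. Then ∇f_tar(x₀)ᵀ A⁺ = ∇h(f_aux(x₀))ᵀ; i.e., the fAux statistic exactly recovers the sensitivity of the model to the (predicted) protected variable. -/

import Mathlib

/-!
By the chain rule the gradient row of `h ∘ f_aux` at `x₀` is `∇h(f_aux x₀)ᵀ A`, and
`A⁺ = Aᵀ (A Aᵀ)⁻¹` is a right inverse of `A`, so multiplying by it leaves `∇h(f_aux x₀)ᵀ`.
-/

open Matrix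

theorem LinearMap.comp_apply_single_eq_vecMul {ι κ R : Type*} [Fintype ι] [Fintype κ]
    [DecidableEq ι] [DecidableEq κ] [CommSemiring R]
    (L : (κ → R) →ₗ[R] R) (M : (ι → R) →ₗ[R] κ → R) :
    (fun j => L (M (Pi.single j 1))) = (fun i => L (Pi.single i 1)) ᵥ* M.toMatrix' := by
  funext j
  conv_lhs => rw [← Finset.univ_sum_single (M (Pi.single j 1))]
  refine (map_sum L _ _).trans (Finset.sum_congr rfl fun i _ => ?_)
  change L _ = L (Pi.single i 1) * M (Pi.single j 1) i
  rw [mul_comm, ← smul_eq_mul, ← L.map_smul, ← Pi.single_smul', smul_eq_mul, mul_one]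

theorem Matrix.vecMul_vecMul_transpose_mul_inv {m n R : Type*} [Fintype m] [Fintype n]
    [DecidableEq m] [CommRing R] (A : Matrix m n R) [Invertible (A * Aᵀ)] (v : m → R) :
    v ᵥ* A ᵥ* (Aᵀ * (A * Aᵀ)⁻¹) = v := by
  rw [vecMul_vecMul, ← Matrix.mul_assoc, mul_inv_of_invertible, vecMul_one]

/-- If the target model factors through the protected variable,
`f_tar = h ∘ f_aux`, then the fAux statistic `∇f_tarᵀ A⁺` exactly recovers the
sensitivity `∇h` of the model to the (predicted) protected variable. -/
theorem faux_recovers_protected_sensitivity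
    {n p : ℕ}
    (f_aux : (Fin n → ℝ) → (Fin p → ℝ))
    (h : (Fin p → ℝ) → ℝ)
    (x₀ : Fin n → ℝ)
    (haux : DifferentiableAt ℝ f_aux x₀)
    (hh : DifferentiableAt ℝ h (f_aux x₀))
    (A : Matrix (Fin p) (Fin n) ℝ)
    (hA : ∀ i j, A i j = fderiv ℝ f_aux x₀ (Pi.single j 1) i)
    [Invertible (A * Aᵀ)] :
    (fun j => fderiv ℝ (h ∘ f_aux) x₀ (Pi.single j 1)) ᵥ* (Aᵀ * (A * Aᵀ)⁻¹) =
      fun i => fderiv ℝ h (f_aux x₀) (Pi.single i 1) := by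
  have hA_jacobian :
      A = LinearMap.toMatrix' (fderiv ℝ f_aux x₀ : (Fin n → ℝ) →ₗ[ℝ] Fin p → ℝ) := by
    ext i j
    exact hA i j
  have hgrad : (fun j => fderiv ℝ (h ∘ f_aux) x₀ (Pi.single j 1)) =
      (fun i => fderiv ℝ h (f_aux x₀) (Pi.single i 1)) ᵥ* A := by
    rw [fderiv_comp x₀ hh haux, hA_jacobian]
    exact LinearMap.comp_apply_single_eq_vecMul _ _
  rw [hgrad, vecMul_vecMul_transpose_mul_inv]
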